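/- Let X, Y, A, W, W' be jointly distributed finitely-valued random variables with H(W|X,Y) = 0, I(X:Y|W') = I(X:Y|W,A), and max{H(W|X,A), H(W|Y,A)} ≤ ρ. If moreover I(X:Y|W') ≥ λ·I(X:Y|W) for some λ ∈ [0,1], then H(W|A) ≤ I(X:Y|A) − λ·I(X:Y|W) + 2ρ. -/

import Mathlib

open scoped BigOperators

namespace PaperIngleton

open Classical in
/-- Probability of an event under a pmf `p` on a finite sample space. -/
noncomputable def prob {Ω : Type*} [Fintype Ω] (p : Ω → ℝ) (E : Ω → Prop) : ℝ :=
  ∑ ω, if E ω then p ω else 0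

/-- Shannon entropy of a finitely-valued random variable `X` under pmf `p`. -/
noncomputable def ent {Ω S : Type*} [Fintype Ω] [Fintype S] (p : Ω → ℝ) (X : Ω → S) : ℝ :=
  -∑ s : S, prob p (fun ω => X ω = s) * Real.log (prob p (fun ω => X ω = s))

/-- Conditional entropy `H(X|Y)`. -/
noncomputable def condEnt {Ω S T : Type*} [Fintype Ω] [Fintype S] [Fintype T]
    (p : Ω → ℝ) (X : Ω → S) (Y : Ω → T) : ℝ :=
  ent p (fun ω => (X ω, Y ω)) - ent p Y

/-- Mutual information `I(X:Y)`. -/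
noncomputable def mi {Ω S T : Type*} [Fintype Ω] [Fintype S] [Fintype T]
    (p : Ω → ℝ) (X : Ω → S) (Y : Ω → T) : ℝ :=
  ent p X + ent p Y - ent p (fun ω => (X ω, Y ω))

/-- Conditional mutual information `I(X:Y|Z)`. -/
noncomputable def cmi {Ω S T U : Type*} [Fintype Ω] [Fintype S] [Fintype T] [Fintype U]
    (p : Ω → ℝ) (X : Ω → S) (Y : Ω → T) (Z : Ω → U) : ℝ :=
  ent p (fun ω => (X ω, Z ω)) + ent p (fun ω => (Y ω, Z ω))
    - ent p (fun ω => (X ω, Y ω, Z ω)) - ent p Z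

end PaperIngleton

/-!
Expanding every term into joint entropies, the Shannon-type inequality
`H(W|A) + I(X:Y|W,A) ≤ I(X:Y|A) + H(W|X,A) + H(W|Y,A)` collapses to `H(X,Y,A) ≤ H(X,Y,W,A)`,
i.e. to monotonicity of entropy. Bounding the two conditional entropies on the right by `ρ` and
`I(X:Y|W,A) = I(X:Y|W')` from below by `λ·I(X:Y|W)` gives the claim.
-/

namespace PaperIngleton

section Entropy

variable {Ω : Type*} [Fintype Ω] (p : Ω → ℝ)

lemma prob_nonneg (hp : ∀ ω, 0 ≤ p ω) (E : Ω → Prop) : 0 ≤ prob p E :=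
  Finset.sum_nonneg fun ω _ => by split <;> simp [hp ω]

lemma prob_eq_zero {E : Ω → Prop} (hE : ∀ ω, ¬ E ω) : prob p E = 0 :=
  Finset.sum_eq_zero fun ω _ => if_neg (hE ω)

lemma prob_eq_sum_prob_pair {V U : Type*} [Fintype V] (W : Ω → V) (Z : Ω → U) (z : U) :
    prob p (fun ω => Z ω = z) = ∑ w : V, prob p (fun ω => (W ω, Z ω) = (w, z)) := by
  classical
  unfold prob
  rw [Finset.sum_comm]
  refine Finset.sum_congr rfl fun ω _ => ?_
  simp [Prod.ext_iff, ite_and, Finset.sum_ite_eq]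

lemma ent_comp_injective {S T : Type*} [Fintype S] [Fintype T] (g : Ω → S) {f : S → T}
    (hf : Function.Injective f) : ent p (fun ω => f (g ω)) = ent p g := by
  unfold ent
  congr 1
  refine (Fintype.sum_of_injective f hf _ _ (fun t ht => ?_) fun s => ?_).symm
  · rw [prob_eq_zero p fun ω h => ht ⟨g ω, h⟩]
    simp
  · simp only [hf.eq_iff]

lemma ent_le_ent_pair {V U : Type*} [Fintype V] [Fintype U] (hp : ∀ ω, 0 ≤ p ω)
    (W : Ω → V) (Z : Ω → U) : ent p Z ≤ ent p (fun ω => (W ω, Z ω)) := by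
  set q : V × U → ℝ := fun t => prob p (fun ω => (W ω, Z ω) = t)
  have hq : ∀ t, 0 ≤ q t := fun t => prob_nonneg p hp _
  have hlog : ∀ w z, q (w, z) * Real.log (q (w, z))
      ≤ q (w, z) * Real.log (∑ w' : V, q (w', z)) := by
    intro w z
    rcases (hq (w, z)).eq_or_lt with h | h
    · simp [← h]
    · exact mul_le_mul_of_nonneg_left (Real.log_le_log h <|
        Finset.single_le_sum (fun w' _ => hq (w', z)) (Finset.mem_univ w)) h.le
  unfold ent
  rw [neg_le_neg_iff]
  calc ∑ t, q t * Real.log (q t)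
      = ∑ w, ∑ z, q (w, z) * Real.log (q (w, z)) := Fintype.sum_prod_type _
    _ ≤ ∑ w, ∑ z, q (w, z) * Real.log (∑ w', q (w', z)) :=
        Finset.sum_le_sum fun w _ => Finset.sum_le_sum fun z _ => hlog w z
    _ = ∑ z, (∑ w, q (w, z)) * Real.log (∑ w', q (w', z)) := by
        rw [Finset.sum_comm]
        simp only [Finset.sum_mul]
    _ = ∑ z, prob p (fun ω => Z ω = z) * Real.log (prob p (fun ω => Z ω = z)) := by
        simp only [q, ← prob_eq_sum_prob_pair]

lemma condEnt_add_cmi_le {S T U V : Type*} [Fintype S] [Fintype T] [Fintype U] [Fintype V]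
    (hp : ∀ ω, 0 ≤ p ω) (X : Ω → S) (Y : Ω → T) (A : Ω → U) (W : Ω → V) :
    condEnt p W A + cmi p X Y (fun ω => (W ω, A ω))
      ≤ cmi p X Y A + condEnt p W (fun ω => (X ω, A ω)) + condEnt p W (fun ω => (Y ω, A ω)) := by
  have hXWA : ent p (fun ω => (X ω, W ω, A ω)) = ent p (fun ω => (W ω, X ω, A ω)) :=
    ent_comp_injective p (fun ω => (W ω, X ω, A ω)) (f := fun t => (t.2.1, t.1, t.2.2))
      (by intro a b h; simp only [Prod.mk.injEq] at h; ext <;> tauto)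
  have hYWA : ent p (fun ω => (Y ω, W ω, A ω)) = ent p (fun ω => (W ω, Y ω, A ω)) :=
    ent_comp_injective p (fun ω => (W ω, Y ω, A ω)) (f := fun t => (t.2.1, t.1, t.2.2))
      (by intro a b h; simp only [Prod.mk.injEq] at h; ext <;> tauto)
  have hXYWA : ent p (fun ω => (X ω, Y ω, W ω, A ω)) = ent p (fun ω => (W ω, X ω, Y ω, A ω)) :=
    ent_comp_injective p (fun ω => (W ω, X ω, Y ω, A ω))
      (f := fun t => (t.2.1, t.2.2.1, t.1, t.2.2.2))
      (by intro a b h; simp only [Prod.mk.injEq] at h; ext <;> tauto)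
  have hmono := ent_le_ent_pair p hp W (fun ω => (X ω, Y ω, A ω))
  unfold condEnt cmi
  linarith

end Entropy

theorem stmt18_general {Ω S T U V V' : Type} [Fintype Ω] [Fintype S] [Fintype T] [Fintype U]
    [Fintype V] [Fintype V']
    (p : Ω → ℝ) (hp : ∀ ω, 0 ≤ p ω)
    (X : Ω → S) (Y : Ω → T) (A : Ω → U) (W : Ω → V) (W' : Ω → V')
    (ρ l : ℝ)
    (hWW' : cmi p X Y W' = cmi p X Y (fun ω => (W ω, A ω)))
    (hρ : max (condEnt p W (fun ω => (X ω, A ω)))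
              (condEnt p W (fun ω => (Y ω, A ω))) ≤ ρ)
    (hlam : l * cmi p X Y W ≤ cmi p X Y W') :
    condEnt p W A ≤ cmi p X Y A - l * cmi p X Y W + 2 * ρ := by
  have hshannon := condEnt_add_cmi_le p hp X Y A W
  have hX := (le_max_left _ _).trans hρ
  have hY := (le_max_right _ _).trans hρ
  linarith

theorem stmt18 {Ω S T U V V' : Type} [Fintype Ω] [Fintype S] [Fintype T] [Fintype U]
    [Fintype V] [Fintype V']
    (p : Ω → ℝ) (hp : ∀ ω, 0 ≤ p ω) (hp1 : ∑ ω, p ω = 1)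
    (X : Ω → S) (Y : Ω → T) (A : Ω → U) (W : Ω → V) (W' : Ω → V')
    (ρ l : ℝ) (hl0 : 0 ≤ l) (hl1 : l ≤ 1)
    (hWXY : condEnt p W (fun ω => (X ω, Y ω)) = 0)
    (hWW' : cmi p X Y W' = cmi p X Y (fun ω => (W ω, A ω)))
    (hρ : max (condEnt p W (fun ω => (X ω, A ω)))
              (condEnt p W (fun ω => (Y ω, A ω))) ≤ ρ)
    (hlam : l * cmi p X Y W ≤ cmi p X Y W') :
    condEnt p W A ≤ cmi p X Y A - l * cmi p X Y W + 2 * ρ :=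
  stmt18_general p hp X Y A W W' ρ l hWW' hρ hlam

end PaperIngleton
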